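/- In a commutative A-loop with P_x = L_x L_{x^{-1}}^{-1}, the identity P_x^n = P_{x^n} holds for all integers n and all x. -/

import Mathlib

/-- A commutative loop: commutative binary operation with two-sided identity
and a left division making all translations bijective. -/
class CommLoop (Q : Type*) extends Mul Q, One Q where
  mul_comm : ∀ x y : Q, x * y = y * x
  one_mul : ∀ x : Q, 1 * x = x
  mul_one : ∀ x : Q, x * 1 = x
  ldiv : Q → Q → Q
  mul_ldiv : ∀ x y : Q, x * ldiv x y = y
  ldiv_mul : ∀ x y : Q, ldiv x (x * y) = y

namespace CommLoop

variable {Q : Type*} [CommLoop Q]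

/-- The inverse `x⁻¹ = x \ 1`. -/
def inv (x : Q) : Q := ldiv x 1

/-- The inner mapping `L_{x,y} = L_x L_y L_{yx}⁻¹` (permutations acting on the right):
`z L_{x,y} = (yx) \ (y(xz))`. -/
def inn (x y z : Q) : Q := ldiv (y * x) (y * (x * z))

/-- Natural powers: `x^n = 1 L_x^n`. -/
def npow (x : Q) (n : ℕ) : Q := (fun y => x * y)^[n] 1

/-- Integer powers: `x^n = 1 L_x^n`. -/
def zpow (x : Q) : ℤ → Q
  | Int.ofNat n => npow x n
  | Int.negSucc n => (fun y => ldiv x y)^[n + 1] 1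

/-- A commutative A-loop: every inner mapping `L_{x,y}` is an automorphism. -/
class IsALoop (Q : Type*) [CommLoop Q] : Prop where
  inn_mul : ∀ x y u v : Q, inn x y (u * v) = inn x y u * inn x y v

/-- The left translation `L_x` as a permutation of `Q`. -/
def Le (x : Q) : Equiv.Perm Q :=
  ⟨fun y => x * y, fun y => ldiv x y, fun y => ldiv_mul x y, fun y => mul_ldiv x y⟩

/-- The permutation `P_x = L_x L_{x⁻¹}⁻¹`. -/
def Pe (x : Q) : Equiv.Perm Q := (Le x).trans (Le (inv x)).symm

/- ----------------------------------------------------------------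
   Auxiliary development
---------------------------------------------------------------- -/

set_option linter.unusedSectionVars false

@[simp] lemma Le_apply (x y : Q) : Le x y = x * y := rfl
@[simp] lemma Le_symm_apply (x y : Q) : (Le x).symm y = ldiv x y := rfl
@[simp] lemma Le_inv_apply (x y : Q) : (Le x)⁻¹ y = ldiv x y := rfl

lemma mul_left_cancel' {x a b : Q} (h : x * a = x * b) : a = b := by
  have := congrArg (fun t => ldiv x t) h
  simpa [ldiv_mul] using this

@[simp] lemma mul_inv (x : Q) : x * inv x = 1 := mul_ldiv x 1

@[simp] lemma inv_mul (x : Q) : inv x * x = 1 := by rw [mul_comm]; exact mul_inv x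

@[simp] lemma ldiv_self (x : Q) : ldiv x x = 1 := by
  have := ldiv_mul x (1 : Q); rwa [mul_one] at this

@[simp] lemma ldiv_one_apply (y : Q) : ldiv (1 : Q) y = y := by
  have := ldiv_mul (1 : Q) y; rwa [one_mul] at this

@[simp] lemma inv_one : inv (1 : Q) = 1 := ldiv_one_apply 1

@[simp] lemma inv_inv (x : Q) : inv (inv x) = x := by
  apply mul_left_cancel' (x := inv x)
  rw [mul_inv, inv_mul]

/-- Inner mapping as a permutation. -/
def innE (x y : Q) : Equiv.Perm Q := (Le x).trans ((Le y).trans (Le (y * x)).symm)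

@[simp] lemma innE_apply (x y z : Q) : innE x y z = ldiv (y * x) (y * (x * z)) := rfl

variable [IsALoop Q]

lemma innE_mul (x y : Q) (u v : Q) : innE x y (u * v) = innE x y u * innE x y v :=
  IsALoop.inn_mul x y u v

lemma innE_one (x y : Q) : innE x y (1 : Q) = 1 := by
  have h : innE x y 1 * 1 = innE x y 1 * innE x y 1 := by
    rw [mul_one, ← innE_mul, one_mul]
  exact (mul_left_cancel' h).symm

lemma innE_inv (x y : Q) (u : Q) : innE x y (inv u) = inv (innE x y u) := by
  apply mul_left_cancel' (x := innE x y u)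
  rw [← innE_mul, mul_inv, mul_inv, innE_one]

/-- `M_x = L_{x⁻¹} L_x` is the inner mapping `L_{x,x⁻¹}`, hence an automorphism. -/
lemma Me_eq (x z : Q) : innE x (inv x) z = inv x * (x * z) := by
  rw [innE_apply, inv_mul, ldiv_one_apply]

lemma Me_fix_inv (x : Q) : innE x (inv x) (inv x) = inv x := by
  rw [Me_eq, mul_inv, mul_one]

lemma Me_fix (x : Q) : innE x (inv x) x = x := by
  have h := innE_inv x (inv x) (inv x)
  rw [Me_fix_inv, inv_inv] at h
  exact h

/-- The key commutation `L_{x⁻¹} L_x = L_x L_{x⁻¹}` (element form). -/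
lemma L2 (x w : Q) : inv x * (x * w) = x * (inv x * w) := by
  have h := innE_mul x (inv x) x (ldiv x w)
  rw [Me_fix, Me_eq, Me_eq, mul_ldiv] at h
  exact h

lemma L2_perm (x : Q) : Le (inv x) * Le x = Le x * Le (inv x) := by
  ext w
  show inv x * (x * w) = x * (inv x * w)
  exact L2 x w

set_option maxHeartbeats 1600000 in
/-- Automorphic inverse property. -/
lemma aip (x y : Q) : inv (x * y) = inv x * inv y := by
  show ldiv (x * y) 1 = ldiv x 1 * ldiv y 1
  have h0 : (ldiv (x * y) (x * (y * (x * (ldiv y (ldiv x (1 : Q))))))) = ((ldiv (x * y) (x * (y * x))) * (ldiv (x * y) (x * (y * (ldiv y (ldiv x (1 : Q))))))) := IsALoop.inn_mul y x x (ldiv y (ldiv x (1 : Q)))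
  have h1 : (ldiv (x * y) (x * (y * ((ldiv y (1 : Q)) * (ldiv y (ldiv x (1 : Q))))))) = ((ldiv (x * y) (x * (y * (ldiv y (1 : Q))))) * (ldiv (x * y) (x * (y * (ldiv y (ldiv x (1 : Q))))))) := IsALoop.inn_mul y x (ldiv y (1 : Q)) (ldiv y (ldiv x (1 : Q)))
  have h2 : (ldiv (y * (ldiv y (1 : Q))) (y * ((ldiv y (1 : Q)) * (y * (ldiv y (ldiv x (1 : Q))))))) = ((ldiv (y * (ldiv y (1 : Q))) (y * ((ldiv y (1 : Q)) * y))) * (ldiv (y * (ldiv y (1 : Q))) (y * ((ldiv y (1 : Q)) * (ldiv y (ldiv x (1 : Q))))))) := IsALoop.inn_mul (ldiv y (1 : Q)) y y (ldiv y (ldiv x (1 : Q)))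
  have h3 : (ldiv (y * (ldiv y (1 : Q))) (y * ((ldiv y (1 : Q)) * ((1 : Q) * (ldiv x (1 : Q)))))) = ((ldiv (y * (ldiv y (1 : Q))) (y * ((ldiv y (1 : Q)) * (1 : Q)))) * (ldiv (y * (ldiv y (1 : Q))) (y * ((ldiv y (1 : Q)) * (ldiv x (1 : Q)))))) := IsALoop.inn_mul (ldiv y (1 : Q)) y (1 : Q) (ldiv x (1 : Q))
  have h4 : (ldiv (y * (ldiv y (1 : Q))) (y * ((ldiv y (1 : Q)) * ((1 : Q) * (ldiv y (ldiv x (1 : Q))))))) = ((ldiv (y * (ldiv y (1 : Q))) (y * ((ldiv y (1 : Q)) * (1 : Q)))) * (ldiv (y * (ldiv y (1 : Q))) (y * ((ldiv y (1 : Q)) * (ldiv y (ldiv x (1 : Q))))))) := IsALoop.inn_mul (ldiv y (1 : Q)) y (1 : Q) (ldiv y (ldiv x (1 : Q)))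
  have h5 : (ldiv ((x * y) * (ldiv (x * y) (1 : Q))) ((x * y) * ((ldiv (x * y) (1 : Q)) * ((x * y) * (ldiv (x * y) x))))) = ((ldiv ((x * y) * (ldiv (x * y) (1 : Q))) ((x * y) * ((ldiv (x * y) (1 : Q)) * (x * y)))) * (ldiv ((x * y) * (ldiv (x * y) (1 : Q))) ((x * y) * ((ldiv (x * y) (1 : Q)) * (ldiv (x * y) x))))) := IsALoop.inn_mul (ldiv (x * y) (1 : Q)) (x * y) (x * y) (ldiv (x * y) x)
  have h6 : (ldiv ((x * y) * (ldiv (x * y) (1 : Q))) ((x * y) * ((ldiv (x * y) (1 : Q)) * ((1 : Q) * x)))) = ((ldiv ((x * y) * (ldiv (x * y) (1 : Q))) ((x * y) * ((ldiv (x * y) (1 : Q)) * (1 : Q)))) * (ldiv ((x * y) * (ldiv (x * y) (1 : Q))) ((x * y) * ((ldiv (x * y) (1 : Q)) * x)))) := IsALoop.inn_mul (ldiv (x * y) (1 : Q)) (x * y) (1 : Q) x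
  have h7 : (ldiv ((x * y) * (ldiv (x * y) (1 : Q))) ((x * y) * ((ldiv (x * y) (1 : Q)) * ((1 : Q) * (ldiv (x * y) x))))) = ((ldiv ((x * y) * (ldiv (x * y) (1 : Q))) ((x * y) * ((ldiv (x * y) (1 : Q)) * (1 : Q)))) * (ldiv ((x * y) * (ldiv (x * y) (1 : Q))) ((x * y) * ((ldiv (x * y) (1 : Q)) * (ldiv (x * y) x))))) := IsALoop.inn_mul (ldiv (x * y) (1 : Q)) (x * y) (1 : Q) (ldiv (x * y) x)
  have h8 : (x * y) = (y * x) := mul_comm x y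
  have h9 : ((x * y) * (ldiv (x * y) (1 : Q))) = (1 : Q) := mul_ldiv (x * y) (1 : Q)
  have h10 : (x * (ldiv x (1 : Q))) = (1 : Q) := mul_ldiv x (1 : Q)
  have h11 : (y * (ldiv y (1 : Q))) = (1 : Q) := mul_ldiv y (1 : Q)
  have h12 : ((ldiv x (1 : Q)) * (ldiv y (1 : Q))) = ((ldiv y (1 : Q)) * (ldiv x (1 : Q))) := mul_comm (ldiv x (1 : Q)) (ldiv y (1 : Q))
  have h13 : ((x * y) * (ldiv (x * y) x)) = x := mul_ldiv (x * y) x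
  have h14 : (y * (ldiv y (ldiv x (1 : Q)))) = (ldiv x (1 : Q)) := mul_ldiv y (ldiv x (1 : Q))
  have h15 : (x * (ldiv x (ldiv (x * y) (1 : Q)))) = (ldiv (x * y) (1 : Q)) := mul_ldiv x (ldiv (x * y) (1 : Q))
  have h16 : (x * (x * y)) = ((x * y) * x) := mul_comm x (x * y)
  have h17 : (x * (1 : Q)) = ((1 : Q) * x) := mul_comm x (1 : Q)
  have h18 : (x * (ldiv (x * y) (1 : Q))) = ((ldiv (x * y) (1 : Q)) * x) := mul_comm x (ldiv (x * y) (1 : Q))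
  have h19 : (y * (1 : Q)) = ((1 : Q) * y) := mul_comm y (1 : Q)
  have h20 : (ldiv x (x * ((ldiv x (1 : Q)) * (ldiv y (1 : Q))))) = ((ldiv x (1 : Q)) * (ldiv y (1 : Q))) := ldiv_mul x ((ldiv x (1 : Q)) * (ldiv y (1 : Q)))
  have h21 : (y * (ldiv y (1 : Q))) = ((ldiv y (1 : Q)) * y) := mul_comm y (ldiv y (1 : Q))
  have h22 : (ldiv y (y * ((ldiv x (1 : Q)) * (ldiv y (1 : Q))))) = ((ldiv x (1 : Q)) * (ldiv y (1 : Q))) := ldiv_mul y ((ldiv x (1 : Q)) * (ldiv y (1 : Q)))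
  have h23 : (ldiv (x * y) ((x * y) * x)) = x := ldiv_mul (x * y) x
  have h24 : ((x * y) * (1 : Q)) = ((1 : Q) * (x * y)) := mul_comm (x * y) (1 : Q)
  have h25 : ((x * y) * (ldiv (x * y) (1 : Q))) = ((ldiv (x * y) (1 : Q)) * (x * y)) := mul_comm (x * y) (ldiv (x * y) (1 : Q))
  have h26 : ((1 : Q) * x) = x := one_mul x
  have h27 : (ldiv (1 : Q) ((1 : Q) * y)) = y := ldiv_mul (1 : Q) y
  have h28 : (ldiv (1 : Q) ((1 : Q) * (x * y))) = (x * y) := ldiv_mul (1 : Q) (x * y)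
  have h29 : (ldiv (1 : Q) ((1 : Q) * (1 : Q))) = (1 : Q) := ldiv_mul (1 : Q) (1 : Q)
  have h30 : ((1 : Q) * (1 : Q)) = (1 : Q) := one_mul (1 : Q)
  have h31 : ((1 : Q) * (ldiv (x * y) (1 : Q))) = ((ldiv (x * y) (1 : Q)) * (1 : Q)) := mul_comm (1 : Q) (ldiv (x * y) (1 : Q))
  have h32 : ((1 : Q) * (ldiv (x * y) (1 : Q))) = (ldiv (x * y) (1 : Q)) := one_mul (ldiv (x * y) (1 : Q))
  have h33 : ((1 : Q) * (ldiv x (1 : Q))) = (ldiv x (1 : Q)) := one_mul (ldiv x (1 : Q))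
  have h34 : ((1 : Q) * (ldiv y (1 : Q))) = ((ldiv y (1 : Q)) * (1 : Q)) := mul_comm (1 : Q) (ldiv y (1 : Q))
  have h35 : ((1 : Q) * (ldiv y (1 : Q))) = (ldiv y (1 : Q)) := one_mul (ldiv y (1 : Q))
  have h36 : ((1 : Q) * (ldiv (x * y) x)) = (ldiv (x * y) x) := one_mul (ldiv (x * y) x)
  have h37 : ((1 : Q) * (ldiv y (ldiv x (1 : Q)))) = (ldiv y (ldiv x (1 : Q))) := one_mul (ldiv y (ldiv x (1 : Q)))
  have h38 : ((1 : Q) * (ldiv x (ldiv (x * y) (1 : Q)))) = (ldiv x (ldiv (x * y) (1 : Q))) := one_mul (ldiv x (ldiv (x * y) (1 : Q)))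
  have h39 : ((ldiv (x * y) (1 : Q)) * (ldiv (x * y) x)) = ((ldiv (x * y) x) * (ldiv (x * y) (1 : Q))) := mul_comm (ldiv (x * y) (1 : Q)) (ldiv (x * y) x)
  have h40 : ((x * y) * (ldiv (x * y) (x * (y * (x * (ldiv y (ldiv x (1 : Q)))))))) = (x * (y * (x * (ldiv y (ldiv x (1 : Q)))))) := mul_ldiv (x * y) (x * (y * (x * (ldiv y (ldiv x (1 : Q))))))
  have h41 : ((x * y) * (ldiv (x * y) (x * (y * ((ldiv y (1 : Q)) * (ldiv y (ldiv x (1 : Q)))))))) = (x * (y * ((ldiv y (1 : Q)) * (ldiv y (ldiv x (1 : Q)))))) := mul_ldiv (x * y) (x * (y * ((ldiv y (1 : Q)) * (ldiv y (ldiv x (1 : Q))))))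
  have h42 : ((1 : Q) * (ldiv (1 : Q) (y * ((ldiv y (1 : Q)) * (ldiv x (1 : Q)))))) = (y * ((ldiv y (1 : Q)) * (ldiv x (1 : Q)))) := mul_ldiv (1 : Q) (y * ((ldiv y (1 : Q)) * (ldiv x (1 : Q))))
  have h43 : ((1 : Q) * (ldiv (1 : Q) (y * ((ldiv y (1 : Q)) * (ldiv y (ldiv x (1 : Q))))))) = (y * ((ldiv y (1 : Q)) * (ldiv y (ldiv x (1 : Q))))) := mul_ldiv (1 : Q) (y * ((ldiv y (1 : Q)) * (ldiv y (ldiv x (1 : Q)))))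
  have h44 : (ldiv (x * y) ((x * y) * (x * ((ldiv x (1 : Q)) * (ldiv y (1 : Q)))))) = (x * ((ldiv x (1 : Q)) * (ldiv y (1 : Q)))) := ldiv_mul (x * y) (x * ((ldiv x (1 : Q)) * (ldiv y (1 : Q))))
  have h45 : ((1 : Q) * (ldiv (1 : Q) ((x * y) * ((ldiv (x * y) (1 : Q)) * x)))) = ((x * y) * ((ldiv (x * y) (1 : Q)) * x)) := mul_ldiv (1 : Q) ((x * y) * ((ldiv (x * y) (1 : Q)) * x))
  have h46 : ((1 : Q) * (ldiv (1 : Q) ((x * y) * ((ldiv (x * y) (1 : Q)) * (ldiv (x * y) x))))) = ((x * y) * ((ldiv (x * y) (1 : Q)) * (ldiv (x * y) x))) := mul_ldiv (1 : Q) ((x * y) * ((ldiv (x * y) (1 : Q)) * (ldiv (x * y) x)))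
  have h47 : (ldiv x (x * (x * ((1 : Q) * (ldiv x (ldiv (x * y) (1 : Q))))))) = (x * ((1 : Q) * (ldiv x (ldiv (x * y) (1 : Q))))) := ldiv_mul x (x * ((1 : Q) * (ldiv x (ldiv (x * y) (1 : Q)))))
  have h48 : (ldiv y (y * (y * ((ldiv y (1 : Q)) * (ldiv y (ldiv x (1 : Q))))))) = (y * ((ldiv y (1 : Q)) * (ldiv y (ldiv x (1 : Q))))) := ldiv_mul y (y * ((ldiv y (1 : Q)) * (ldiv y (ldiv x (1 : Q)))))
  grind

lemma ldiv_inv (x y : Q) : inv (ldiv x y) = ldiv (inv x) (inv y) := by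
  apply mul_left_cancel' (x := inv x)
  rw [mul_ldiv, ← aip, mul_ldiv]

/-- `L_{x,y} = L_{x⁻¹,y⁻¹}`. -/
lemma F8 (x y : Q) : innE x y = innE (inv x) (inv y) := by
  ext z
  have h1 : innE x y z = inv (innE x y (inv z)) := by
    rw [innE_inv, inv_inv]
  rw [h1, innE_apply, innE_apply, ldiv_inv, aip y x, aip y (x * inv z), aip x (inv z), inv_inv]

lemma Le_innE (x y : Q) : Le (y * x) * innE x y = Le y * Le x := by
  ext z
  show (y * x) * (ldiv (y * x) (y * (x * z))) = y * (x * z)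
  rw [mul_ldiv]

lemma Pe_def (x : Q) : Pe x = (Le (inv x))⁻¹ * Le x := rfl

lemma commute_Le (x : Q) : Commute (Le (inv x)) (Le x) := L2_perm x

lemma Pe_def' (x : Q) : Pe x = Le x * (Le (inv x))⁻¹ := by
  rw [Pe_def, (commute_Le x).inv_left.eq]

/-- The fundamental relation `P_{yx} = L_y P_x L_{y⁻¹}⁻¹`. -/
lemma PL (x y : Q) : Pe (y * x) = Le y * Pe x * (Le (inv y))⁻¹ := by
  have hA : Le (y * x) * innE x y = Le y * Le x := Le_innE x y
  have hD : Le (inv (y * x)) * innE x y = Le (inv y) * Le (inv x) := by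
    rw [aip, F8 x y]; exact Le_innE (inv x) (inv y)
  have h5 : Le (y * x) * (Le (inv (y * x)))⁻¹
      = (Le y * Le x) * (Le (inv y) * Le (inv x))⁻¹ := by
    rw [← hA, ← hD]; group
  rw [Pe_def' (y * x), h5, Pe_def' x]
  group

lemma Pe_mul_LeInv (x : Q) : Pe x * Le (inv x) = Le x := by
  rw [Pe_def']; group

lemma LeInv_mul_Pe (x : Q) : (Le x)⁻¹ * Pe x = (Le (inv x))⁻¹ := by
  rw [Pe_def']; group

/-- The key identity `P_{xa} = P_x P_{x⁻¹ a} P_x`. -/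
lemma K2 (x a : Q) : Pe (x * a) = Pe x * Pe (inv x * a) * Pe x := by
  have h1 : Pe (inv x * a) = Le (inv x) * Pe a * (Le x)⁻¹ := by
    have := PL a (inv x)
    rwa [inv_inv] at this
  have h2 : Pe (x * a) = Le x * Pe a * (Le (inv x))⁻¹ := PL a x
  rw [h1, h2]
  symm
  calc Pe x * (Le (inv x) * Pe a * (Le x)⁻¹) * Pe x
      = (Pe x * Le (inv x)) * Pe a * ((Le x)⁻¹ * Pe x) := by group
    _ = Le x * Pe a * (Le (inv x))⁻¹ := by rw [Pe_mul_LeInv, LeInv_mul_Pe]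


lemma Le_one : Le (1 : Q) = 1 := by
  ext z; show (1 : Q) * z = z; exact one_mul z

lemma Pe_one : Pe (1 : Q) = 1 := by
  rw [Pe_def, inv_one, Le_one]; group

lemma Pe_inv (x : Q) : Pe (inv x) = (Pe x)⁻¹ := by
  rw [Pe_def, Pe_def, inv_inv]; group

lemma npow_eq (x : Q) (n : ℕ) : npow x n = ((Le x) ^ n) 1 := by
  induction n with
  | zero => rfl
  | succ k ih =>
    show (fun y => x * y)^[k + 1] 1 = _
    rw [Function.iterate_succ_apply']
    show x * (fun y => x * y)^[k] 1 = _
    rw [pow_succ']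
    show _ = Le x (((Le x) ^ k) 1)
    rw [← ih]
    rfl

lemma negpow_eq (x : Q) (n : ℕ) : (fun y => ldiv x y)^[n] 1 = (((Le x)⁻¹) ^ n) 1 := by
  induction n with
  | zero => rfl
  | succ k ih =>
    rw [Function.iterate_succ_apply', pow_succ']
    show ldiv x ((fun y => ldiv x y)^[k] 1) = ((Le x)⁻¹) ((((Le x)⁻¹) ^ k) 1)
    rw [ih]
    rfl

lemma zpow_eq (x : Q) (n : ℤ) : zpow x n = ((Le x) ^ n) 1 := by
  cases n with
  | ofNat m => rw [show zpow x (Int.ofNat m) = npow x m from rfl, npow_eq,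
      show (Int.ofNat m) = (m : ℤ) from rfl, zpow_natCast]
  | negSucc m =>
    rw [show zpow x (Int.negSucc m) = (fun y => ldiv x y)^[m + 1] 1 from rfl, negpow_eq,
      zpow_negSucc, inv_pow]

lemma mul_pow_apply (x : Q) (k : ℤ) : x * (((Le x) ^ k) 1) = ((Le x) ^ (k + 1)) 1 := by
  rw [show k + 1 = 1 + k by ring, zpow_add, zpow_one]
  rfl

lemma inv_mul_pow_apply (x : Q) (k : ℤ) :
    inv x * (((Le x) ^ k) 1) = ((Le x) ^ (k - 1)) 1 := by
  have h1 : Le (inv x) * (Le x) ^ k = (Le x) ^ k * Le (inv x) :=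
    ((commute_Le x).zpow_right k).eq
  have h2 : inv x * (((Le x) ^ k) 1) = (Le (inv x) * (Le x) ^ k) 1 := rfl
  rw [h2, h1]
  show ((Le x) ^ k) (inv x * 1) = ((Le x) ^ (k - 1)) 1
  rw [mul_one]
  rw [zpow_sub_one]
  show _ = ((Le x) ^ k) ((Le x)⁻¹ 1)
  rfl

lemma Pe_pow_apply (x : Q) (k : ℤ) : Pe x (((Le x) ^ k) 1) = ((Le x) ^ (k + 2)) 1 := by
  have h1 : Pe x (((Le x) ^ k) 1) = (Le (inv x))⁻¹ (x * (((Le x) ^ k) 1)) := rfl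
  rw [h1, mul_pow_apply]
  have h2 : Le (inv x) (((Le x) ^ (k + 2)) 1) = ((Le x) ^ (k + 1)) 1 := by
    show inv x * (((Le x) ^ (k + 2)) 1) = _
    rw [inv_mul_pow_apply, show k + 2 - 1 = k + 1 by ring]
  rw [← h2, Equiv.Perm.inv_def, Equiv.symm_apply_apply]

lemma main_nat (x : Q) (n : ℕ) : (Pe x) ^ (n : ℤ) = Pe (((Le x) ^ (n : ℤ)) 1) := by
  suffices H : ∀ m : ℕ, ((Pe x) ^ (m : ℤ) = Pe (((Le x) ^ (m : ℤ)) 1)) ∧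
      ((Pe x) ^ ((m : ℤ) + 1) = Pe (((Le x) ^ ((m : ℤ) + 1)) 1)) from (H n).1
  intro m
  induction m with
  | zero =>
    constructor
    · show (Pe x) ^ (0 : ℤ) = Pe (((Le x) ^ (0 : ℤ)) 1)
      rw [zpow_zero, zpow_zero]
      show (1 : Equiv.Perm Q) = Pe 1
      rw [Pe_one]
    · show (Pe x) ^ ((0 : ℤ) + 1) = Pe (((Le x) ^ ((0 : ℤ) + 1)) 1)
      norm_num
      show Pe x = Pe (x * 1)
      rw [mul_one]
  | succ k ih =>
    have hk2 : ((k : ℤ) + 1) + 1 = (k : ℤ) + 2 := by ring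
    constructor
    · have : ((k + 1 : ℕ) : ℤ) = (k : ℤ) + 1 := by push_cast; ring
      rw [this]; exact ih.2
    · have hcast : ((k + 1 : ℕ) : ℤ) + 1 = (k : ℤ) + 2 := by push_cast; ring
      rw [hcast]
      have ha := K2 x (((Le x) ^ ((k : ℤ) + 1)) 1)
      rw [mul_pow_apply x ((k : ℤ) + 1)] at ha
      rw [inv_mul_pow_apply x ((k : ℤ) + 1), show (k : ℤ) + 1 - 1 = (k : ℤ) by ring] at ha
      rw [show (k : ℤ) + 1 + 1 = (k : ℤ) + 2 by ring] at ha
      rw [ha, ← ih.1]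
      group

lemma main_neg (x : Q) (n : ℕ) : (Pe x) ^ (-(n : ℤ)) = Pe (((Le x) ^ (-(n : ℤ))) 1) := by
  suffices H : ∀ m : ℕ, ((Pe x) ^ (-(m : ℤ)) = Pe (((Le x) ^ (-(m : ℤ))) 1)) ∧
      ((Pe x) ^ (-(m : ℤ) - 1) = Pe (((Le x) ^ (-(m : ℤ) - 1)) 1)) from (H n).1
  intro m
  induction m with
  | zero =>
    constructor
    · show (Pe x) ^ (-(0 : ℤ)) = Pe (((Le x) ^ (-(0 : ℤ))) 1)
      norm_num
      show (1 : Equiv.Perm Q) = Pe 1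
      rw [Pe_one]
    · show (Pe x) ^ (-(0 : ℤ) - 1) = Pe (((Le x) ^ (-(0 : ℤ) - 1)) 1)
      norm_num
      show (Pe x)⁻¹ = Pe (inv x)
      rw [Pe_inv]
  | succ k ih =>
    constructor
    · have : -((k + 1 : ℕ) : ℤ) = -(k : ℤ) - 1 := by push_cast; ring
      rw [this]; exact ih.2
    · have hcast : -((k + 1 : ℕ) : ℤ) - 1 = -(k : ℤ) - 2 := by push_cast; ring
      rw [hcast]
      have ha := K2 (inv x) (((Le x) ^ (-(k : ℤ) - 1)) 1)
      rw [inv_inv] at ha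
      rw [show (inv x * ((Le x ^ (-(k : ℤ) - 1))) 1) = ((Le x) ^ (-(k : ℤ) - 2)) 1 by
        rw [inv_mul_pow_apply]; ring_nf] at ha
      rw [show (x * ((Le x ^ (-(k : ℤ) - 1))) 1) = ((Le x) ^ (-(k : ℤ))) 1 by
        rw [mul_pow_apply]; ring_nf] at ha
      rw [ha, ← ih.1, Pe_inv]
      group

end CommLoop

open CommLoop in
/-- `P_x^n = P_{x^n}` for all integers `n`. -/
theorem stmt10 {Q : Type*} [CommLoop Q] [IsALoop Q] (x : Q) (n : ℤ) :
    (Pe x) ^ n = Pe (zpow x n) := by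
  rw [zpow_eq]
  cases n with
  | ofNat m =>
    rw [show (Int.ofNat m) = (m : ℤ) from rfl]
    exact main_nat x m
  | negSucc m =>
    rw [show (Int.negSucc m) = -((m + 1 : ℕ) : ℤ) by rw [Int.negSucc_eq]; push_cast; ring]
    exact main_neg x (m + 1)
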